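/- Let n ≥ 1 and let D be the matrix with rows indexed by functions f : Fin (n+1) → Fin 2 and columns indexed by functions g : Fin n → Fin 2, with D_{f,g} = 1 if f(i) = g(i) for all i ∈ Fin n (viewing Fin n included in Fin (n+1)) and f(n) = g(n−1), and 0 otherwise (D duplicates the last tensor factor, i.e. branches at the last leaf). Then for every A ⊆ Fin n and x ∈ {α, β}: D·𝔏_x^A = 𝔏_x^(A′)·D, where A′ ⊆ Fin (n+1) is A ∪ {n} if n−1 ∈ A and is A otherwise (A included into Fin (n+1)). -/

import Mathlib

/-! Expanding `∏_{i ∈ A} (X^(i) + 1)` gives `𝔏_X^A = (X + 1)^(A) - 1`. For `X = L_α, L_β`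
the matrix `X + 1` is the rank-one matrix `e_k 1ᵀ` (with `k = 1, 0`), so `(X + 1)^(A)` has
entries `∏_{i ∈ A} [f i = k] · ∏_{j ∉ A} [f j = g j]`. Both `D (X + 1)^(A)` and
`(X + 1)^(A′) D` keep all factors at the coordinates below the last leaf; at the last leaf
and its copy the two sides differ by the identity `[a = b] [b = c] = [a = c] [b = c]`. -/

open Matrix


/-- The Markov generator `L_α = [[-1, 0], [1, 0]]`. -/
noncomputable def Lalpha : Matrix (Fin 2) (Fin 2) ℝ := !![-1, 0; 1, 0]

/-- The Markov generator `L_β = [[0, 1], [0, -1]]`. -/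
noncomputable def Lbeta : Matrix (Fin 2) (Fin 2) ℝ := !![0, 1; 0, -1]

/-- `X^(A)`: the operator on the `n`-fold tensor power `(ℝ²)^⊗n` (indexed by functions
`Fin n → Fin 2`) acting as `X` on the tensor factors in `A` and as the identity elsewhere:
`(X^(A))_{f,g} = (∏_{i ∈ A} X_{f(i),g(i)}) · (∏_{j ∉ A} [f(j) = g(j)])`. -/
noncomputable def opOn {n : ℕ} (X : Matrix (Fin 2) (Fin 2) ℝ) (A : Finset (Fin n)) :
    Matrix (Fin n → Fin 2) (Fin n → Fin 2) ℝ :=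
  fun f g => (∏ i ∈ A, X (f i) (g i)) * ∏ j ∈ Aᶜ, (if f j = g j then (1 : ℝ) else 0)

/-- `𝔏_X^A := ∑_{∅ ≠ B ⊆ A} X^(B)`. -/
noncomputable def frakLA {n : ℕ} (X : Matrix (Fin 2) (Fin 2) ℝ) (A : Finset (Fin n)) :
    Matrix (Fin n → Fin 2) (Fin n → Fin 2) ℝ :=
  ∑ B ∈ A.powerset.filter (fun B => B.Nonempty), opOn X B

/-- The branching operator `D` that duplicates the last tensor factor: for
`f : Fin (m+2) → Fin 2` and `g : Fin (m+1) → Fin 2`, `D_{f,g} = 1` iff `f` agrees with `g`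
on the first `m+1` coordinates and `f` at the new last coordinate equals `g` at its last
coordinate. -/
noncomputable def dupLast (m : ℕ) : Matrix (Fin (m + 2) → Fin 2) (Fin (m + 1) → Fin 2) ℝ :=
  fun f g =>
    if (∀ i : Fin (m + 1), f i.castSucc = g i) ∧ f (Fin.last (m + 1)) = g (Fin.last m)
    then 1 else 0

section TensorOperators

variable {n : ℕ}

lemma opOn_apply (X : Matrix (Fin 2) (Fin 2) ℝ) (A : Finset (Fin n)) (f g : Fin n → Fin 2) :
    opOn X A f g = ∏ i, if i ∈ A then X (f i) (g i) else if f i = g i then 1 else 0 := by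
  rw [opOn, ← Finset.prod_mul_prod_compl A]
  congr 1 <;> refine Finset.prod_congr rfl fun i hi => ?_
  · rw [if_pos hi]
  · rw [if_neg (Finset.mem_compl.mp hi)]

lemma opOn_empty (X : Matrix (Fin 2) (Fin 2) ℝ) : opOn X (∅ : Finset (Fin n)) = 1 := by
  ext f g
  simp only [opOn_apply, Finset.notMem_empty, if_false, Finset.prod_boole, Matrix.one_apply,
    Finset.mem_univ, true_implies, funext_iff]

lemma sum_powerset_opOn (X : Matrix (Fin 2) (Fin 2) ℝ) (A : Finset (Fin n)) :
    ∑ B ∈ A.powerset, opOn X B = opOn (X + 1) A := by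
  ext f g
  simp only [Matrix.sum_apply, opOn, Matrix.add_apply, Matrix.one_apply]
  rw [Finset.prod_add, Finset.sum_mul]
  refine Finset.sum_congr rfl fun B hB => ?_
  rw [mul_assoc, ← compl_sdiff_compl,
    Finset.prod_sdiff (Finset.compl_subset_compl.mpr (Finset.mem_powerset.mp hB))]

lemma frakLA_eq_opOn_add_one_sub_one (X : Matrix (Fin 2) (Fin 2) ℝ) (A : Finset (Fin n)) :
    frakLA X A = opOn (X + 1) A - 1 := by
  have h : A.powerset.filter (fun B => B.Nonempty) = A.powerset.erase ∅ := by
    ext B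
    simp [Finset.nonempty_iff_ne_empty, and_comm]
  rw [frakLA, h, Finset.sum_erase_eq_sub (Finset.empty_mem_powerset A), sum_powerset_opOn,
    opOn_empty]

end TensorOperators

def resetTo (k : Fin 2) : Matrix (Fin 2) (Fin 2) ℝ :=
  Matrix.of fun a _ => if a = k then 1 else 0

lemma Lalpha_add_one : Lalpha + 1 = resetTo 1 := by
  ext a b
  fin_cases a <;> fin_cases b <;> simp [Lalpha, resetTo]

lemma Lbeta_add_one : Lbeta + 1 = resetTo 0 := by
  ext a b
  fin_cases a <;> fin_cases b <;> simp [Lbeta, resetTo]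

section Branching

variable {m : ℕ}

lemma dupLast_mul_apply (M : Matrix (Fin (m + 1) → Fin 2) (Fin (m + 1) → Fin 2) ℝ)
    (f : Fin (m + 2) → Fin 2) (g : Fin (m + 1) → Fin 2) :
    (dupLast m * M) f g =
      (if f (Fin.last (m + 1)) = f (Fin.last m).castSucc then 1 else 0) *
        M (fun i => f i.castSucc) g := by
  rw [Matrix.mul_apply, Finset.sum_eq_single (fun i => f i.castSucc)]
  · simp [dupLast]
  · intro g' _ hg'
    have : ¬ ∀ i : Fin (m + 1), f i.castSucc = g' i := fun hf => hg' (funext hf).symm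
    simp [dupLast, this]
  · simp

lemma mul_dupLast_apply (M : Matrix (Fin (m + 2) → Fin 2) (Fin (m + 2) → Fin 2) ℝ)
    (f : Fin (m + 2) → Fin 2) (g : Fin (m + 1) → Fin 2) :
    (M * dupLast m) f g = M f (Fin.snoc g (g (Fin.last m))) := by
  rw [Matrix.mul_apply, Finset.sum_eq_single (Fin.snoc g (g (Fin.last m)))]
  · simp [dupLast]
  · intro f' _ hf'
    have : ¬ ((∀ i : Fin (m + 1), f' i.castSucc = g i) ∧
        f' (Fin.last (m + 1)) = g (Fin.last m)) := by
      rintro ⟨hcast, hlast⟩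
      refine hf' (funext fun j => ?_)
      induction j using Fin.lastCases with
      | last => simpa using hlast
      | cast i => simpa using hcast i
    simp [dupLast, this]
  · simp

lemma ite_eq_mul_ite_eq (a b c : Fin 2) :
    (if a = b then (1 : ℝ) else 0) * (if b = c then 1 else 0) =
      (if a = c then 1 else 0) * (if b = c then 1 else 0) := by
  by_cases hbc : b = c <;> simp [hbc]

def branchLast (A : Finset (Fin (m + 1))) : Finset (Fin (m + 2)) :=
  if Fin.last m ∈ A then insert (Fin.last (m + 1)) (A.image Fin.castSucc)
  else A.image Fin.castSucc

lemma castSucc_mem_branchLast {A : Finset (Fin (m + 1))} {i : Fin (m + 1)} :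
    i.castSucc ∈ branchLast A ↔ i ∈ A := by
  unfold branchLast
  split_ifs <;> simp [(Fin.castSucc_lt_last i).ne]

lemma last_mem_branchLast {A : Finset (Fin (m + 1))} :
    Fin.last (m + 1) ∈ branchLast A ↔ Fin.last m ∈ A := by
  unfold branchLast
  split_ifs with h <;> simp [h, fun i : Fin (m + 1) => (Fin.castSucc_lt_last i).ne]

lemma dupLast_mul_opOn_resetTo (k : Fin 2) (A : Finset (Fin (m + 1))) :
    dupLast m * opOn (resetTo k) A = opOn (resetTo k) (branchLast A) * dupLast m := by
  ext f g
  rw [dupLast_mul_apply, mul_dupLast_apply, opOn_apply, opOn_apply,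
    Fin.prod_univ_castSucc (n := m + 1)]
  simp only [castSucc_mem_branchLast, last_mem_branchLast, Fin.snoc_castSucc, Fin.snoc_last,
    resetTo, Matrix.of_apply]
  rw [Fin.prod_univ_castSucc (n := m)]
  by_cases hA : Fin.last m ∈ A <;> simp only [hA, if_true, if_false] <;>
    rw [mul_left_comm, ite_eq_mul_ite_eq] <;> ring

lemma dupLast_mul_frakLA {X : Matrix (Fin 2) (Fin 2) ℝ} {k : Fin 2} (hX : X + 1 = resetTo k)
    (A : Finset (Fin (m + 1))) :
    dupLast m * frakLA X A = frakLA X (branchLast A) * dupLast m := by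
  rw [frakLA_eq_opOn_add_one_sub_one, frakLA_eq_opOn_add_one_sub_one, hX, Matrix.mul_sub,
    Matrix.sub_mul, Matrix.mul_one, Matrix.one_mul, dupLast_mul_opOn_resetTo]

end Branching

/-- For `n = m + 1 ≥ 1`, every `A ⊆ Fin n` and `x ∈ {α, β}`: `D·𝔏_x^A = 𝔏_x^(A′)·D`,
where `A′ ⊆ Fin (n+1)` is `A ∪ {n}` if the last leaf `n−1` lies in `A`, and `A`
otherwise (with `A` included into `Fin (n+1)` via `Fin.castSucc`). -/
theorem dupLast_intertwine (m : ℕ) (A : Finset (Fin (m + 1))) :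
    dupLast m * frakLA Lalpha A =
      frakLA Lalpha
        (if Fin.last m ∈ A then insert (Fin.last (m + 1)) (A.image Fin.castSucc)
         else A.image Fin.castSucc) * dupLast m ∧
    dupLast m * frakLA Lbeta A =
      frakLA Lbeta
        (if Fin.last m ∈ A then insert (Fin.last (m + 1)) (A.image Fin.castSucc)
         else A.image Fin.castSucc) * dupLast m := by
  exact ⟨dupLast_mul_frakLA Lalpha_add_one A, dupLast_mul_frakLA Lbeta_add_one A⟩
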